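/- Let α1 > 0 and let η satisfy 0 < η ≤ (α1/100)^{64}. There exists n0 = n0(α1, η) such that for every integer n > n0 the following holds: let G be a complete graph whose edges are coloured with three colours (red, blue, green), containing disjoint vertex sets X1 and Y1 with |X1|, |Y1| ≥ (1/2)⟨⟨α1 n⟩⟩ such that the red graphs G1[X1] and G1[Y1] are each 8η^{1/64}n-almost-complete. If there exist distinct vertices x1, x2 ∈ X1 and distinct vertices y1, y2 ∈ Y1 such that the edges x1y1 and x2y2 are both coloured red, then G contains a red cycle on exactly ⟨⟨α1 n⟩⟩ vertices. -/

import Mathlib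

open SimpleGraph

/-- The largest even integer not greater than `x`. -/
noncomputable def evenFloor (x : ℝ) : ℤ := 2 * ⌊x / 2⌋

/-- The largest odd integer not greater than `x`. -/
noncomputable def oddFloor (x : ℝ) : ℤ := 2 * ⌊(x - 1) / 2⌋ + 1

/-- `G` contains a cycle on exactly `m` vertices. -/
def HasCycleLen {V : Type*} (G : SimpleGraph V) (m : ℕ) : Prop :=
  ∃ (v : V) (w : G.Walk v v), w.IsCycle ∧ w.length = m

/-- The colour-`i` subgraph of the complete graph on `V` whose edges are coloured by `χ`. -/
def colourGraph {V : Type*} (χ : Sym2 V → Fin 3) (i : Fin 3) : SimpleGraph V where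
  Adj u v := u ≠ v ∧ χ s(u, v) = i
  symm := ⟨by
    intro u v h
    refine ⟨h.1.symm, ?_⟩
    rw [Sym2.eq_swap]
    exact h.2⟩
  loopless := ⟨fun u h => h.1 rfl⟩

/-- Every 3-colouring of the edges of the complete graph on `N` vertices yields, for some
`i ∈ {1,2,3}`, a cycle on `mᵢ` vertices all of whose edges have colour `i`. -/
def CycleRamseyProp (m₁ m₂ m₃ N : ℕ) : Prop :=
  ∀ χ : Sym2 (Fin N) → Fin 3,
    HasCycleLen (colourGraph χ 0) m₁ ∨ HasCycleLen (colourGraph χ 1) m₂ ∨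
      HasCycleLen (colourGraph χ 2) m₃

/-- The degree of `v` in `G`. -/
noncomputable def ndeg {V : Type*} (G : SimpleGraph V) (v : V) : ℕ :=
  {u : V | G.Adj v u}.ncard

/-- The number of neighbours of `v` inside the set `S`. -/
noncomputable def degIn {V : Type*} (G : SimpleGraph V) (S : Finset V) (v : V) : ℕ :=
  {u : V | u ∈ S ∧ G.Adj v u}.ncard

/-- The number of ordered pairs `(a, b) ∈ A × B` with `a` adjacent to `b` in `G`. -/
noncomputable def pairCount {V : Type*} (G : SimpleGraph V) (A B : Finset V) : ℕ :=
  {p : V × V | p.1 ∈ A ∧ p.2 ∈ B ∧ G.Adj p.1 p.2}.ncard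

/-- The density `d(A,B)` of the pair `(A, B)` in `G`. -/
noncomputable def density {V : Type*} (G : SimpleGraph V) (A B : Finset V) : ℝ :=
  (pairCount G A B : ℝ) / ((A.card : ℝ) * (B.card : ℝ))

/-- The pair `(A, B)` is `(ε, G)`-regular. -/
def IsRegularPair {V : Type*} (G : SimpleGraph V) (ε : ℝ) (A B : Finset V) : Prop :=
  ∀ A' ⊆ A, ∀ B' ⊆ B, ε * (A.card : ℝ) ≤ (A'.card : ℝ) →
    ε * (B.card : ℝ) ≤ (B'.card : ℝ) →
    |density G A' B' - density G A B| < ε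

/-- The pair `(A, B)` is simultaneously `(ε, Gᵣ)`-regular for `r = 1, 2, 3`. -/
def SimRegular {V : Type*} (ε : ℝ) (G₁ G₂ G₃ : SimpleGraph V) (A B : Finset V) : Prop :=
  IsRegularPair G₁ ε A B ∧ IsRegularPair G₂ ε A B ∧ IsRegularPair G₃ ε A B

/-- `M` is a connected-matching in `G`: a collection of edges, pairwise vertex-disjoint,
all lying in the same connected component of `G`. -/
def IsConnMatching {V : Type*} (G : SimpleGraph V) (M : Finset (V × V)) : Prop :=
  (∀ e ∈ M, G.Adj e.1 e.2) ∧
  (∀ e ∈ M, ∀ f ∈ M, e ≠ f → e.1 ≠ f.1 ∧ e.1 ≠ f.2 ∧ e.2 ≠ f.1 ∧ e.2 ≠ f.2) ∧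
  (∀ e ∈ M, ∀ f ∈ M, G.Reachable e.1 f.1)

/-- `G` contains a connected-matching on at least `m` vertices. -/
def HasConnMatching {V : Type*} (G : SimpleGraph V) (m : ℝ) : Prop :=
  ∃ M : Finset (V × V), IsConnMatching G M ∧ m ≤ 2 * (M.card : ℝ)

/-- `G` contains an odd connected-matching on at least `m` vertices: a connected-matching
whose component also contains an odd cycle. -/
def HasOddConnMatching {V : Type*} (G : SimpleGraph V) (m : ℝ) : Prop :=
  ∃ M : Finset (V × V), IsConnMatching G M ∧ m ≤ 2 * (M.card : ℝ) ∧
    ∃ (v : V) (w : G.Walk v v), w.IsCycle ∧ Odd w.length ∧ ∀ e ∈ M, G.Reachable e.1 v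

/-- `(V₀, V₁, …, V_K)` (given as `P : Fin (K+1) → Finset V`, with `P 0` the exceptional class)
is an `(ε, G₁, G₂, G₃)`-regular partition. -/
def IsRegularPartition3 {V : Type*} [Fintype V] (ε : ℝ) (G₁ G₂ G₃ : SimpleGraph V)
    {K : ℕ} (P : Fin (K + 1) → Finset V) : Prop :=
  (∀ i j, i ≠ j → Disjoint (P i) (P j)) ∧
  (∀ v : V, ∃ i, v ∈ P i) ∧
  ((P 0).card : ℝ) ≤ ε * (Fintype.card V : ℝ) ∧
  (∀ i j : Fin (K + 1), i ≠ 0 → j ≠ 0 → (P i).card = (P j).card) ∧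
  (∀ i : Fin (K + 1), i ≠ 0 →
    (({j : Fin (K + 1) | j ≠ 0 ∧ j ≠ i ∧
        ¬ SimRegular ε G₁ G₂ G₃ (P i) (P j)}.ncard : ℝ) ≤ ε * K))

/-- The colour-`Gc` subgraph of the three-multicoloured `(ε, ξ, Π)`-reduced-graph of the
three-coloured graph with colour subgraphs `G₁, G₂, G₃` and regular partition `P`:
vertices are the non-exceptional classes `P 1, …, P K`; two of them are adjacent if the pair is
simultaneously `(ε, Gᵣ)`-regular for `r = 1,2,3` and receive colour `Gc` if moreover the
`Gc`-density of the pair is at least `ξ`. -/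
def reducedGraph {V : Type*} (ε ξ : ℝ) (G₁ G₂ G₃ : SimpleGraph V) {K : ℕ}
    (P : Fin (K + 1) → Finset V) (Gc : SimpleGraph V) : SimpleGraph (Fin K) where
  Adj a b := a ≠ b ∧
    (SimRegular ε G₁ G₂ G₃ (P a.succ) (P b.succ) ∧
      SimRegular ε G₁ G₂ G₃ (P b.succ) (P a.succ)) ∧
    (ξ ≤ density Gc (P a.succ) (P b.succ) ∧ ξ ≤ density Gc (P b.succ) (P a.succ))
  symm := ⟨by
    intro a b h
    exact ⟨h.1.symm, ⟨h.2.1.2, h.2.1.1⟩, ⟨h.2.2.2, h.2.2.1⟩⟩⟩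
  loopless := ⟨fun a h => h.1 rfl⟩

/-- The two-multicoloured graph induced on `X`, with colour subgraphs `Gγ₁` (colour `γ₁`)
and `Gγ₂` (colour `γ₂`), contains a two-multicoloured spanning subgraph belonging to the class
`H(x₁, x₂, c₁, c₂, γ₁, γ₂)`. -/
def ContainsClassH {V : Type*} [DecidableEq V] (Gγ₁ Gγ₂ : SimpleGraph V) (X : Finset V)
    (x₁ x₂ c₁ c₂ : ℝ) : Prop :=
  ∃ (H₁ H₂ : SimpleGraph V) (X₁ X₂ : Finset V),
    H₁ ≤ Gγ₁ ∧ H₂ ≤ Gγ₂ ∧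
    (∀ u v : V, (H₁ ⊔ H₂).Adj u v → u ∈ X ∧ v ∈ X) ∧
    Disjoint X₁ X₂ ∧ X₁ ∪ X₂ = X ∧
    x₁ ≤ (X₁.card : ℝ) ∧ x₂ ≤ (X₂.card : ℝ) ∧
    (∀ v ∈ X, ((X.card : ℝ) - 1) - c₁ ≤ (degIn (H₁ ⊔ H₂) X v : ℝ)) ∧
    (∀ v ∈ X₁, (1 - c₂) * ((X₁.card : ℝ) - 1) ≤ (degIn H₁ X₁ v : ℝ)) ∧
    (∀ v ∈ X₁, (degIn H₂ X₁ v : ℝ) ≤ c₂ * ((X₁.card : ℝ) - 1)) ∧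
    (∀ v ∈ X₁, (1 - c₂) * (X₂.card : ℝ) ≤ (degIn H₂ X₂ v : ℝ)) ∧
    (∀ v ∈ X₂, (1 - c₂) * (X₁.card : ℝ) ≤ (degIn H₂ X₁ v : ℝ)) ∧
    (∀ v ∈ X₁, (degIn H₁ X₂ v : ℝ) ≤ c₂ * (X₂.card : ℝ)) ∧
    (∀ v ∈ X₂, (degIn H₁ X₁ v : ℝ) ≤ c₂ * (X₁.card : ℝ))

/-- Membership of the structure `H((a − 2η^{1/32})k, (b/2 − 2η^{1/32})k, 3η⁴k, η^{1/32}, γ₁, γ₂)`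
on a vertex set `X`, where `Ga`, `Gb` are the colour-`γ₁` and colour-`γ₂` subgraphs. -/
def MemH1 {V : Type*} [DecidableEq V] (Ga Gb : SimpleGraph V) (a b η : ℝ) (k : ℕ)
    (X : Finset V) : Prop :=
  ContainsClassH Ga Gb X ((a - 2 * η ^ ((1 : ℝ) / 32)) * k)
    ((b / 2 - 2 * η ^ ((1 : ℝ) / 32)) * k) (3 * η ^ 4 * k) (η ^ ((1 : ℝ) / 32))

/-- The edge `uv` is coloured exclusively with the colour of `Ga` (and not the colours of
`Gb`, `Gc`). -/
def ExclColour {V : Type*} (Ga Gb Gc : SimpleGraph V) (u v : V) : Prop :=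
  Ga.Adj u v ∧ ¬ Gb.Adj u v ∧ ¬ Gc.Adj u v

/-- The three-multicoloured graph with colour subgraphs `G₁, G₂, G₃` (red, blue, green)
contains a subgraph from the class `K(x₁, x₂, x₃, c)`. -/
def ContainsClassK {V : Type*} [DecidableEq V] (G₁ G₂ G₃ : SimpleGraph V)
    (x₁ x₂ x₃ c : ℝ) : Prop :=
  ∃ (H : SimpleGraph V) (X₁ X₂ X₃ : Finset V),
    H ≤ G₁ ⊔ G₂ ⊔ G₃ ∧
    Disjoint X₁ X₂ ∧ Disjoint X₁ X₃ ∧ Disjoint X₂ X₃ ∧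
    x₁ ≤ (X₁.card : ℝ) ∧ x₂ ≤ (X₂.card : ℝ) ∧ x₃ ≤ (X₃.card : ℝ) ∧
    (∀ u v : V, H.Adj u v → u ∈ X₁ ∪ X₂ ∪ X₃ ∧ v ∈ X₁ ∪ X₂ ∪ X₃) ∧
    (∀ v ∈ X₁ ∪ X₂ ∪ X₃,
      (((X₁ ∪ X₂ ∪ X₃).card : ℝ) - 1) - c ≤ (degIn H (X₁ ∪ X₂ ∪ X₃) v : ℝ)) ∧
    (∀ u ∈ X₁, ∀ v ∈ X₃, H.Adj u v → ExclColour G₁ G₂ G₃ u v) ∧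
    (∀ u ∈ X₂, ∀ v ∈ X₃, H.Adj u v → ExclColour G₂ G₁ G₃ u v) ∧
    (∀ u ∈ X₃, ∀ v ∈ X₃, H.Adj u v → ExclColour G₃ G₁ G₂ u v)

/-- The three-multicoloured graph with colour subgraphs `G₁, G₂, G₃` (red, blue, green)
contains a subgraph from the class `K*(x₁, x₂, y₁, y₂, z, c)`. -/
def ContainsClassKstar {V : Type*} [DecidableEq V] (G₁ G₂ G₃ : SimpleGraph V)
    (x₁ x₂ y₁ y₂ z c : ℝ) : Prop :=
  ∃ (H : SimpleGraph V) (X₁ X₂ Y₁ Y₂ : Finset V),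
    H ≤ G₁ ⊔ G₂ ⊔ G₃ ∧
    Disjoint X₁ X₂ ∧ Disjoint X₁ Y₁ ∧ Disjoint X₁ Y₂ ∧
    Disjoint X₂ Y₁ ∧ Disjoint X₂ Y₂ ∧ Disjoint Y₁ Y₂ ∧
    x₁ ≤ (X₁.card : ℝ) ∧ x₂ ≤ (X₂.card : ℝ) ∧ y₁ ≤ (Y₁.card : ℝ) ∧ y₂ ≤ (Y₂.card : ℝ) ∧
    z ≤ (Y₁.card : ℝ) + (Y₂.card : ℝ) ∧
    (∀ u v : V, H.Adj u v → u ∈ X₁ ∪ X₂ ∪ Y₁ ∪ Y₂ ∧ v ∈ X₁ ∪ X₂ ∪ Y₁ ∪ Y₂) ∧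
    (∀ v ∈ X₁ ∪ X₂ ∪ Y₁ ∪ Y₂,
      (((X₁ ∪ X₂ ∪ Y₁ ∪ Y₂).card : ℝ) - 1) - c ≤ (degIn H (X₁ ∪ X₂ ∪ Y₁ ∪ Y₂) v : ℝ)) ∧
    (∀ u ∈ X₁, ∀ v ∈ Y₁, H.Adj u v → ExclColour G₁ G₂ G₃ u v) ∧
    (∀ u ∈ X₂, ∀ v ∈ Y₂, H.Adj u v → ExclColour G₁ G₂ G₃ u v) ∧
    (∀ u ∈ X₁, ∀ v ∈ Y₂, H.Adj u v → ExclColour G₂ G₁ G₃ u v) ∧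
    (∀ u ∈ X₂, ∀ v ∈ Y₁, H.Adj u v → ExclColour G₂ G₁ G₃ u v) ∧
    (∀ u ∈ X₁, ∀ v ∈ X₂, H.Adj u v → ExclColour G₃ G₁ G₂ u v) ∧
    (∀ u ∈ Y₁, ∀ v ∈ Y₂, H.Adj u v → ExclColour G₃ G₁ G₂ u v)

/-!
If every vertex of a finite set `S` is non-adjacent to at most `d` vertices of `S` (itself
included) and `4d + 2 ≤ |S|`, then any two vertices of `S` are joined by a Hamiltonian path of
`S`. Start from a path `a c b` through a common neighbour `c` and insert the missing vertices one
at a time: while the path has at most `2d + 1` vertices, a vertex adjacent to both of its first two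
vertices exists by counting; once it has `2d + 2` vertices, any missing vertex `w` is adjacent to
both vertices of one of the `d + 1` disjoint consecutive pairs, since it has at most `d`
non-neighbours. Hamiltonian red paths `x₁ … x₂` and `y₂ … y₁` on subsets of `X₁` and `Y₁` of size
`⌊α₁ n / 2⌋`, closed up by the red edges `x₂y₂` and `y₁x₁`, form the red cycle.
-/

open Finset

theorem List.exists_eq_append_cons_cons_of_countP_le {α : Type*} (P : α → Prop)
    [DecidablePred P] :
    ∀ (l : List α) (d : ℕ), l.countP (fun u => ¬P u) ≤ d → 2 * d + 2 ≤ l.length →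
      ∃ A x y B, l = A ++ x :: y :: B ∧ P x ∧ P y
  | x :: y :: l, d, hcount, hlen => by
    by_cases hxy : P x ∧ P y
    · exact ⟨[], x, y, l, rfl, hxy⟩
    have hd : l.countP (fun u => ¬P u) + 1 ≤ d := by
      by_cases hx : P x <;> by_cases hy : P y <;> simp_all; omega
    obtain ⟨A, x', y', B, rfl, hx'y'⟩ :=
      List.exists_eq_append_cons_cons_of_countP_le P l (d - 1) (by omega)
        (by simp only [List.length_cons] at hlen; omega)
    exact ⟨x :: y :: A, x', y', B, rfl, hx'y'⟩
  | [], _, _, hlen | [_], _, _, hlen => by simp at hlen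

namespace SimpleGraph

variable {V : Type*} {G : SimpleGraph V}

namespace Walk

theorem exists_support_eq_of_isChain {a b : V} {l : List V} (hl : l.IsChain G.Adj)
    (ha : l.head? = some a) (hb : l.getLast? = some b) : ∃ p : G.Walk a b, p.support = l := by
  have hne : l ≠ [] := by rintro rfl; simp at ha
  refine ⟨(ofSupport l hne hl).copy ?_ ?_, by rw [support_copy, support_ofSupport]⟩
  · rw [List.head?_eq_some_head hne] at ha
    exact Option.some_injective _ ha
  · rw [List.getLast?_eq_some_getLast hne] at hb
    exact Option.some_injective _ hb

theorem IsPath.exists_isPath_support_perm_cons {a b x y w : V} {A B : List V}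
    {p : G.Walk a b} (hp : p.IsPath) (hsupp : p.support = A ++ x :: y :: B)
    (hw : w ∉ p.support) (hxw : G.Adj x w) (hwy : G.Adj w y) :
    ∃ q : G.Walk a b, q.IsPath ∧ q.support.Perm (w :: p.support) := by
  have hchain := p.isChain_adj_support
  have hhead : p.support.head? = some a := by
    rw [List.head?_eq_some_head p.support_ne_nil, head_support]
  have hlast : p.support.getLast? = some b := by
    rw [List.getLast?_eq_some_getLast p.support_ne_nil, getLast_support]
  rw [hsupp] at hchain hhead hlast
  obtain ⟨q, hq⟩ := exists_support_eq_of_isChain (G := G) (a := a) (b := b)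
    (l := A ++ x :: w :: y :: B) (by simp_all) (by simpa [List.head?_append] using hhead)
    (by simpa [List.getLast?_append] using hlast)
  have hperm : q.support.Perm (w :: p.support) := by
    rw [hq, hsupp]
    exact (List.Perm.append_left A (List.Perm.swap x w (y :: B)).symm).trans List.perm_middle
  refine ⟨q, ?_, hperm⟩
  rw [isPath_def, hperm.nodup_iff, List.nodup_cons]
  exact ⟨hw, hp.support_nodup⟩

theorem IsPath.isCycle_cons {u v : V} {p : G.Walk u v} (hp : p.IsPath) (h : G.Adj v u)
    (hlen : p.length ≠ 1) : (cons h p).IsCycle :=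
  (cons_isCycle_iff p h).mpr
    ⟨hp, fun he => hlen (hp.length_eq_one_of_mem_edges (Sym2.eq_swap ▸ he))⟩

end Walk

section AlmostComplete

variable [DecidableEq V] [DecidableRel G.Adj] {S : Finset V} {d : ℕ}

theorem exists_mem_adj_adj_of_card_lt {x y : V} (hx : #{u ∈ S | ¬G.Adj x u} ≤ d)
    (hy : #{u ∈ S | ¬G.Adj y u} ≤ d) (F : Finset V) (hF : 2 * d + #F < #S) :
    ∃ w ∈ S, w ∉ F ∧ G.Adj x w ∧ G.Adj y w := by
  by_contra! h
  have hcover : S ⊆ {u ∈ S | ¬G.Adj x u} ∪ {u ∈ S | ¬G.Adj y u} ∪ F := by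
    intro w hw
    by_cases hwF : w ∈ F
    · simp [hwF]
    by_cases hxw : G.Adj x w
    · simp [hw, h w hw hwF hxw]
    · simp [hw, hxw]
  have := (card_le_card hcover).trans
    ((card_union_le _ _).trans (Nat.add_le_add_right (card_union_le _ _) _))
  omega

theorem exists_eq_append_cons_cons_and_adj_adj (hS : ∀ v ∈ S, #{u ∈ S | ¬G.Adj v u} ≤ d)
    (hcard : 4 * d + 2 ≤ #S) {l : List V} (hl : l.Nodup) (hlS : ∀ u ∈ l, u ∈ S)
    (hlen : 2 ≤ l.length) {u : V} (hu : u ∈ S) (hul : u ∉ l) :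
    ∃ A x y B w, l = A ++ x :: y :: B ∧ w ∈ S ∧ w ∉ l ∧ G.Adj x w ∧ G.Adj w y := by
  by_cases hshort : l.length ≤ 2 * d + 1
  · obtain ⟨x, y, B, rfl⟩ : ∃ x y B, l = x :: y :: B := by
      match l, hlen with
      | x :: y :: B, _ => exact ⟨x, y, B, rfl⟩
    obtain ⟨w, hwS, hwl, hxw, hyw⟩ := exists_mem_adj_adj_of_card_lt
      (hS x (hlS x (by simp))) (hS y (hlS y (by simp))) (x :: y :: B).toFinset
      (by have := List.toFinset_card_le (x :: y :: B); omega)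
    exact ⟨[], x, y, B, w, rfl, hwS, by simpa using hwl, hxw, hyw.symm⟩
  · have hcount : l.countP (fun v => ¬G.Adj u v) ≤ d := by
      rw [← hl.card_eq_countP]
      refine (card_le_card (filter_subset_filter _ fun v hv => ?_)).trans (hS u hu)
      exact hlS v (List.mem_toFinset.mp hv)
    obtain ⟨A, x, y, B, rfl, hux, huy⟩ :=
      List.exists_eq_append_cons_cons_of_countP_le (G.Adj u) l d hcount (by omega)
    exact ⟨A, x, y, B, u, rfl, hu, hul, hux.symm, huy⟩

theorem exists_isPath_support_toFinset_eq_of_isPath (hS : ∀ v ∈ S, #{u ∈ S | ¬G.Adj v u} ≤ d)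
    (hcard : 4 * d + 2 ≤ #S) {a b : V} (hab : a ≠ b) (p : G.Walk a b) (hp : p.IsPath)
    (hpS : ∀ u ∈ p.support, u ∈ S) : ∃ q : G.Walk a b, q.IsPath ∧ q.support.toFinset = S := by
  have hpS' : p.support.toFinset ⊆ S := fun u hu => hpS u (List.mem_toFinset.mp hu)
  by_cases hcov : S ⊆ p.support.toFinset
  · exact ⟨p, hp, hpS'.antisymm hcov⟩
  obtain ⟨u, huS, hup⟩ := not_subset.mp hcov
  have hp0 : p.length ≠ 0 := fun h => hab (p.eq_of_length_eq_zero h)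
  obtain ⟨A, x, y, B, w, hsupp, hwS, hwp, hxw, hwy⟩ :=
    exists_eq_append_cons_cons_and_adj_adj hS hcard hp.support_nodup hpS
      (by rw [Walk.length_support]; omega) huS (by simpa using hup)
  obtain ⟨q, hq, hperm⟩ := hp.exists_isPath_support_perm_cons hsupp hwp hxw hwy
  -- `hqlen` and `hpcard` show that `#S - p.length` decreases
  have hqlen : q.length = p.length + 1 := by
    simpa only [Walk.length_support, List.length_cons, add_left_inj] using hperm.length_eq
  have hpcard : p.length + 1 < #S := by
    rw [← Walk.length_support, ← List.toFinset_card_of_nodup hp.support_nodup]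
    exact card_lt_card (Finset.ssubset_iff_subset_ne.mpr ⟨hpS', fun h => hcov h.ge⟩)
  have hqS : ∀ v ∈ q.support, v ∈ S := by
    intro v hv
    rcases List.mem_cons.mp (hperm.mem_iff.mp hv) with rfl | hv
    exacts [hwS, hpS v hv]
  exact exists_isPath_support_toFinset_eq_of_isPath hS hcard hab q hq hqS
termination_by #S - p.length

theorem exists_isPath_length_eq (hS : ∀ v ∈ S, #{u ∈ S | ¬G.Adj v u} ≤ d) {t : ℕ}
    (ht : 4 * d + 2 ≤ t) (htS : t ≤ #S) {a b : V} (ha : a ∈ S) (hb : b ∈ S) (hab : a ≠ b) :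
    ∃ p : G.Walk a b, p.IsPath ∧ (∀ u ∈ p.support, u ∈ S) ∧ p.length + 1 = t := by
  obtain ⟨T, habT, hTS, hT⟩ :=
    exists_subsuperset_card_eq (insert_subset ha (singleton_subset_iff.mpr hb))
      ((card_le_two (a := a) (b := b)).trans (by omega)) htS
  have hT' : ∀ v ∈ T, #{u ∈ T | ¬G.Adj v u} ≤ d := fun v hv =>
    (card_le_card (filter_subset_filter _ hTS)).trans (hS v (hTS hv))
  have haT : a ∈ T := habT (mem_insert_self a {b})
  have hbT : b ∈ T := habT (mem_insert_of_mem (mem_singleton_self b))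
  -- `a` is a non-neighbour of itself
  have hd : 0 < d := (card_pos.mpr ⟨a, by simp [haT]⟩).trans_le (hT' a haT)
  obtain ⟨c, hcT, hcab, hac, hbc⟩ :=
    exists_mem_adj_adj_of_card_lt (hT' a haT) (hT' b hbT) {a, b}
      (by have := card_le_two (a := a) (b := b); omega)
  have hp : (Walk.cons hac (Walk.cons hbc.symm Walk.nil)).IsPath := by
    simp_all [Walk.isPath_def, hac.ne, hbc.ne.symm]
  obtain ⟨p, hp, hpT⟩ := exists_isPath_support_toFinset_eq_of_isPath hT' (by omega) hab _ hp
    (by simp [haT, hbT, hcT])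
  refine ⟨p, hp, fun u hu => hTS (hpT ▸ List.mem_toFinset.mpr hu), ?_⟩
  rw [← hT, ← hpT, List.toFinset_card_of_nodup hp.support_nodup, Walk.length_support]

end AlmostComplete

theorem exists_isCycle_length_eq_of_isPath {X Y : Finset V} (hXY : Disjoint X Y)
    {x₁ x₂ y₁ y₂ : V} {p : G.Walk x₁ x₂} {q : G.Walk y₂ y₁} (hp : p.IsPath) (hq : q.IsPath)
    (hpX : ∀ u ∈ p.support, u ∈ X) (hqY : ∀ u ∈ q.support, u ∈ Y) (hx : x₁ ≠ x₂)
    (h₂ : G.Adj x₂ y₂) (h₁ : G.Adj y₁ x₁) :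
    ∃ c : G.Walk y₁ y₁, c.IsCycle ∧ c.length = p.length + q.length + 2 := by
  have hr : (p.append (Walk.cons h₂ q)).IsPath := by
    rw [Walk.isPath_def, Walk.support_append, Walk.support_cons, List.tail_cons,
      List.nodup_append]
    exact ⟨hp.support_nodup, hq.support_nodup, fun u hu v hv huv =>
      Finset.disjoint_left.mp hXY (hpX u hu) (huv ▸ hqY v hv)⟩
  have hp0 : p.length ≠ 0 := fun h => hx (p.eq_of_length_eq_zero h)
  exact ⟨Walk.cons h₁ _, hr.isCycle_cons h₁ (by simp; omega), by simp; omega⟩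

end SimpleGraph

theorem degIn_eq_card_filter {V : Type*} (G : SimpleGraph V) [DecidableRel G.Adj]
    (S : Finset V) (v : V) : degIn G S v = #{u ∈ S | G.Adj v u} := by
  rw [degIn, ← Set.ncard_coe_finset, coe_filter]

theorem card_filter_not_adj_le_of_degIn {V : Type*} {G : SimpleGraph V} [DecidableRel G.Adj]
    {S : Finset V} {v : V} {D : ℝ} (h : ((#S : ℝ) - 1) - D ≤ degIn G S v) :
    #{u ∈ S | ¬G.Adj v u} ≤ ⌊1 + D⌋₊ := by
  refine Nat.le_floor ?_
  have hsplit := S.card_filter_add_card_filter_not (G.Adj v)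
  rw [degIn_eq_card_filter] at h
  have : (#S : ℝ) = #{u ∈ S | G.Adj v u} + #{u ∈ S | ¬G.Adj v u} := by
    exact_mod_cast hsplit.symm
  linarith

theorem evenFloor_eq_two_mul_natFloor {x : ℝ} (hx : 0 ≤ x) :
    evenFloor x = 2 * (⌊x / 2⌋₊ : ℤ) := by
  rw [evenFloor, Int.natCast_floor_eq_floor (by positivity)]

theorem four_mul_floor_add_two_le_floor {α η : ℝ} {n : ℕ} (hα : 0 < α) (hη0 : 0 ≤ η)
    (hη : η ≤ (α / 100) ^ (64 : ℕ)) (hn : 100 / α ≤ n) :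
    4 * ⌊1 + 8 * η ^ ((1 : ℝ) / 64) * n⌋₊ + 2 ≤ ⌊α * n / 2⌋₊ := by
  have hroot : η ^ ((1 : ℝ) / 64) ≤ α / 100 := by
    calc η ^ ((1 : ℝ) / 64) ≤ ((α / 100) ^ (64 : ℕ)) ^ ((64 : ℕ)⁻¹ : ℝ) := by
          rw [one_div, ← Nat.cast_ofNat]
          exact Real.rpow_le_rpow hη0 hη (by positivity)
      _ = α / 100 := Real.pow_rpow_inv_natCast (by positivity) (by norm_num)
  have hαn : 100 ≤ α * n := by rwa [div_le_iff₀' hα] at hn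
  have hfloor := Nat.floor_le (show 0 ≤ 1 + 8 * η ^ ((1 : ℝ) / 64) * n by positivity)
  refine Nat.le_floor ?_
  push_cast
  nlinarith [mul_le_mul_of_nonneg_right hroot (Nat.cast_nonneg n)]

/-- Two vertex-disjoint red edges between two large red-almost-complete sets yield a red cycle
on exactly `⟪α₁ n⟫` vertices. -/
theorem red_cycle_from_two_edges (α₁ η : ℝ) (hα₁ : 0 < α₁) (hη0 : 0 < η)
    (hη : η ≤ (α₁ / 100) ^ (64 : ℕ)) :
    ∃ n₀ : ℕ, ∀ n : ℕ, n₀ < n →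
      ∀ (V : Type) [Fintype V], ∀ (χ : Sym2 V → Fin 3) (X₁ Y₁ : Finset V),
        Disjoint X₁ Y₁ →
        (evenFloor (α₁ * n) : ℝ) / 2 ≤ (X₁.card : ℝ) →
        (evenFloor (α₁ * n) : ℝ) / 2 ≤ (Y₁.card : ℝ) →
        (∀ v ∈ X₁, ((X₁.card : ℝ) - 1) - 8 * η ^ ((1 : ℝ) / 64) * n ≤
          (degIn (colourGraph χ 0) X₁ v : ℝ)) →
        (∀ v ∈ Y₁, ((Y₁.card : ℝ) - 1) - 8 * η ^ ((1 : ℝ) / 64) * n ≤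
          (degIn (colourGraph χ 0) Y₁ v : ℝ)) →
        ∀ x₁ x₂ y₁ y₂ : V, x₁ ∈ X₁ → x₂ ∈ X₁ → x₁ ≠ x₂ → y₁ ∈ Y₁ → y₂ ∈ Y₁ → y₁ ≠ y₂ →
          χ s(x₁, y₁) = 0 → χ s(x₂, y₂) = 0 →
          HasCycleLen (colourGraph χ 0) (evenFloor (α₁ * n)).toNat := by
  classical
  refine ⟨⌈100 / α₁⌉₊, fun n hn V _ χ X₁ Y₁ hXY hX hY hdegX hdegY x₁ x₂ y₁ y₂
    hx₁ hx₂ hx hy₁ hy₂ hy h₁ h₂ => ?_⟩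
  have hdt := four_mul_floor_add_two_le_floor hα₁ hη0.le hη
    ((Nat.le_ceil _).trans (by exact_mod_cast hn.le))
  have hm := evenFloor_eq_two_mul_natFloor (mul_nonneg hα₁.le (Nat.cast_nonneg n))
  have hhalf : (evenFloor (α₁ * n) : ℝ) / 2 = ⌊α₁ * n / 2⌋₊ := by rw [hm]; push_cast; ring
  obtain ⟨p, hp, hpX, hplen⟩ := exists_isPath_length_eq
    (fun v hv => card_filter_not_adj_le_of_degIn (hdegX v hv)) hdt
    (by exact_mod_cast hhalf ▸ hX) hx₁ hx₂ hx
  obtain ⟨q, hq, hqY, hqlen⟩ := exists_isPath_length_eq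
    (fun v hv => card_filter_not_adj_le_of_degIn (hdegY v hv)) hdt
    (by exact_mod_cast hhalf ▸ hY) hy₂ hy₁ hy.symm
  have hxy₂ : (colourGraph χ 0).Adj x₂ y₂ :=
    ⟨fun h => disjoint_left.mp hXY hx₂ (h ▸ hy₂), h₂⟩
  have hyx₁ : (colourGraph χ 0).Adj y₁ x₁ :=
    ⟨fun h => disjoint_left.mp hXY hx₁ (h ▸ hy₁), by rw [Sym2.eq_swap]; exact h₁⟩
  obtain ⟨c, hc, hclen⟩ := exists_isCycle_length_eq_of_isPath hXY hp hq hpX hqY hx hxy₂ hyx₁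
  exact ⟨y₁, c, hc, by rw [hclen, hm]; omega⟩
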